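/- Let Q be a directed graph and let W be any collection of subgraphs of Q, directed by inclusion, such that the union of the vertex sets of members of W is V(Q) and the union of their edge sets is E(Q). Then OA(Q) is the inductive limit of the operator algebras OA(F) for F ∈ W, with connecting maps induced by the inclusions of subgraphs. -/

import Mathlib

noncomputable section

open scoped Classical

/-! ## Operator algebras, concretely represented -/

/-- A (concrete) operator algebra: a norm-closed subalgebra of the bounded
operators on a complex Hilbert space. -/
structure OpAlg where
  H : Type
  [nacg : NormedAddCommGroup H]
  [ips : InnerProductSpace ℂ H]
  [cs : CompleteSpace H]
  carrier : NonUnitalSubalgebra ℂ (H →L[ℂ] H)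
  isClosed : IsClosed (carrier : Set (H →L[ℂ] H))

attribute [instance] OpAlg.nacg OpAlg.ips OpAlg.cs

/-- The amplification of an `n × n` matrix of operators on `H` to an operator on
`H ⊕₂ ⋯ ⊕₂ H` (`n` summands, with the Hilbert space norm). -/
def matAmp {H : Type} [NormedAddCommGroup H] [InnerProductSpace ℂ H]
    {n : ℕ} (a : Matrix (Fin n) (Fin n) (H →L[ℂ] H)) :
    (PiLp 2 fun _ : Fin n => H) →L[ℂ] (PiLp 2 fun _ : Fin n => H) :=
  ((PiLp.continuousLinearEquiv 2 ℂ fun _ : Fin n => H).symm.toContinuousLinearMap.comp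
    (ContinuousLinearMap.pi fun i => ∑ j, (a i j).comp (ContinuousLinearMap.proj j))).comp
    (PiLp.continuousLinearEquiv 2 ℂ fun _ : Fin n => H).toContinuousLinearMap

/-- The matrix norm of a matrix over a concrete operator algebra. -/
def matNorm (A : OpAlg) {n : ℕ} (a : Matrix (Fin n) (Fin n) A.carrier) : ℝ :=
  ‖matAmp fun i j => (a i j : A.H →L[ℂ] A.H)‖

/-- A completely contractive homomorphism of operator algebras. -/
structure CCHom (A B : OpAlg) where
  toHom : A.carrier →ₙₐ[ℂ] B.carrier
  completelyContractive : ∀ (n : ℕ) (a : Matrix (Fin n) (Fin n) A.carrier),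
    matNorm B (fun i j => toHom (a i j)) ≤ matNorm A a

/-- A completely isometric homomorphism. -/
def CCHom.CompletelyIsometric {A B : OpAlg} (φ : CCHom A B) : Prop :=
  ∀ (n : ℕ) (a : Matrix (Fin n) (Fin n) A.carrier),
    matNorm B (fun i j => φ.toHom (a i j)) = matNorm A a

/-- Two operator algebras are completely isometrically isomorphic if there is a
bijective completely isometric homomorphism between them. -/
def CIIso (A B : OpAlg) : Prop :=
  ∃ φ : CCHom A B, Function.Bijective φ.toHom ∧ φ.CompletelyIsometric

/-! ## Directed graphs -/

/-- A directed graph: vertices, edges, and source and range maps. -/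
structure DiGraph where
  V : Type
  E : Type
  s : E → V
  r : E → V

/-- A contractive representation of a directed graph in an operator algebra:
vertices go to (self-adjoint) projections, edges go to contractions, compatibly
with the range and source maps. -/
structure GraphRep (Q : DiGraph) (A : OpAlg) where
  v : Q.V → A.carrier
  e : Q.E → A.carrier
  idem : ∀ x, v x * v x = v x
  selfAdjoint : ∀ x, IsSelfAdjoint (v x : A.H →L[ℂ] A.H)
  contractive : ∀ x, ‖(e x : A.H →L[ℂ] A.H)‖ ≤ 1
  range_mul : ∀ x, v (Q.r x) * e x = e x
  mul_source : ∀ x, e x * v (Q.s x) = e x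

/-- The representation generates the operator algebra. -/
def GraphRep.Generates {Q : DiGraph} {A : OpAlg} (ρ : GraphRep Q A) : Prop :=
  closure ((NonUnitalAlgebra.adjoin ℂ (Set.range ρ.v ∪ Set.range ρ.e) :
    NonUnitalSubalgebra ℂ A.carrier) : Set A.carrier) = Set.univ

/-- A homomorphism extends (intertwines) two representations of the same graph. -/
def ExtendsRep {Q : DiGraph} {A B : OpAlg} (ψ : CCHom A B)
    (ρ : GraphRep Q A) (σ : GraphRep Q B) : Prop :=
  (∀ x, ψ.toHom (ρ.v x) = σ.v x) ∧ (∀ x, ψ.toHom (ρ.e x) = σ.e x)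

/-- `(A, ι)` is *the* universal operator algebra of the directed graph `Q`:
`ι` generates, and every contractive representation of `Q` factors uniquely
through a completely contractive homomorphism. -/
def IsUniversalOA (Q : DiGraph) (A : OpAlg) (ι : GraphRep Q A) : Prop :=
  ι.Generates ∧
    ∀ (B : OpAlg) (σ : GraphRep Q B), ∃! ψ : CCHom A B, ExtendsRep ψ ι σ


/-! ## Statement 13 specific definitions -/

/-- A homomorphism of directed graphs. -/
structure GraphHom (Q R : DiGraph) where
  vMap : Q.V → R.V
  eMap : Q.E → R.E
  s_eq : ∀ e, R.s (eMap e) = vMap (Q.s e)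
  r_eq : ∀ e, R.r (eMap e) = vMap (Q.r e)

/-- Pulling back a representation along a graph homomorphism. -/
def GraphRep.comp {Q R : DiGraph} {A : OpAlg} (ι : GraphRep R A) (k : GraphHom Q R) :
    GraphRep Q A where
  v := fun x => ι.v (k.vMap x)
  e := fun x => ι.e (k.eMap x)
  idem := fun x => ι.idem _
  selfAdjoint := fun x => ι.selfAdjoint _
  contractive := fun x => ι.contractive _
  range_mul := fun x => by rw [← k.r_eq]; exact ι.range_mul _
  mul_source := fun x => by rw [← k.s_eq]; exact ι.mul_source _

/-- A subgraph of a directed graph. -/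
structure Subgraph (Q : DiGraph) where
  VS : Set Q.V
  ES : Set Q.E
  src_mem : ∀ e ∈ ES, Q.s e ∈ VS
  rng_mem : ∀ e ∈ ES, Q.r e ∈ VS

/-- The directed graph underlying a subgraph. -/
def Subgraph.toGraph {Q : DiGraph} (F : Subgraph Q) : DiGraph :=
  ⟨F.VS, F.ES, fun e => ⟨Q.s e.1, F.src_mem e.1 e.2⟩, fun e => ⟨Q.r e.1, F.rng_mem e.1 e.2⟩⟩

instance (Q : DiGraph) : Preorder (Subgraph Q) where
  le F G := F.VS ⊆ G.VS ∧ F.ES ⊆ G.ES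
  le_refl F := ⟨subset_rfl, subset_rfl⟩
  le_trans F G K h h' := ⟨h.1.trans h'.1, h.2.trans h'.2⟩

/-- The inclusion of a subgraph into a larger subgraph, as a graph homomorphism. -/
def Subgraph.incl {Q : DiGraph} {F G : Subgraph Q} (h : F ≤ G) :
    GraphHom F.toGraph G.toGraph :=
  ⟨fun v => ⟨v.1, h.1 v.2⟩, fun e => ⟨e.1, h.2 e.2⟩, fun _ => rfl, fun _ => rfl⟩

/-- The inclusion of a subgraph into the whole graph, as a graph homomorphism. -/
def Subgraph.inclTop {Q : DiGraph} (F : Subgraph Q) : GraphHom F.toGraph Q :=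
  ⟨Subtype.val, Subtype.val, fun _ => rfl, fun _ => rfl⟩


/-! ## Auxiliary lemmas -/

set_option maxHeartbeats 2000000
set_option synthInstance.maxHeartbeats 1000000
set_option linter.unusedSectionVars false

section AuxAnalysis

variable {H : Type} [NormedAddCommGroup H] [InnerProductSpace ℂ H]

lemma norm_pilp_one (x : PiLp 2 fun _ : Fin 1 => H) : ‖x‖ = ‖x 0‖ := by
  rw [PiLp.norm_eq_sum (p := 2) (by norm_num)]
  simp only [Fin.sum_univ_one, ENNReal.toReal_ofNat]
  rw [← Real.rpow_mul (norm_nonneg _)]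
  norm_num

lemma matAmp_apply {n : ℕ} (a : Matrix (Fin n) (Fin n) (H →L[ℂ] H))
    (x : PiLp 2 fun _ : Fin n => H) (i : Fin n) :
    matAmp a x i = ∑ j, a i j (x j) := by
  have h : matAmp a x i
      = (∑ j, (a i j).comp (ContinuousLinearMap.proj (R := ℂ) (φ := fun _ : Fin n => H) j))
          ((PiLp.continuousLinearEquiv 2 ℂ fun _ : Fin n => H) x) := rfl
  rw [h, ContinuousLinearMap.sum_apply]
  rfl

lemma matNorm_one (A : OpAlg) (a : Matrix (Fin 1) (Fin 1) A.carrier) :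
    matNorm A a = ‖(a 0 0 : A.H →L[ℂ] A.H)‖ := by
  unfold matNorm
  set b : Matrix (Fin 1) (Fin 1) (A.H →L[ℂ] A.H) := fun i j => (a i j : A.H →L[ℂ] A.H) with hb
  have hb00 : (a 0 0 : A.H →L[ℂ] A.H) = b 0 0 := rfl
  rw [hb00]
  apply le_antisymm
  · apply ContinuousLinearMap.opNorm_le_bound _ (norm_nonneg _)
    intro x
    rw [norm_pilp_one (matAmp b x), matAmp_apply, Fin.sum_univ_one, norm_pilp_one x]
    exact (b 0 0).le_opNorm _
  · refine ContinuousLinearMap.opNorm_le_bound (b 0 0)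
      (ContinuousLinearMap.opNorm_nonneg _) fun y => ?_
    let xx : PiLp 2 (fun _ : Fin 1 => A.H) := WithLp.toLp 2 (fun _ => y)
    have h1 : (b 0 0) y = matAmp b xx 0 := by rw [matAmp_apply, Fin.sum_univ_one]
    have h2 : ‖xx‖ = ‖y‖ := norm_pilp_one xx
    rw [h1]
    calc ‖matAmp b xx 0‖ = ‖matAmp b xx‖ := (norm_pilp_one _).symm
      _ ≤ ‖matAmp b‖ * ‖xx‖ := (matAmp b).le_opNorm xx
      _ = ‖matAmp b‖ * ‖y‖ := by rw [h2]

variable [CompleteSpace H]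

lemma inner_zero_of_fixed_of_ker (e : H →L[ℂ] H) (hnorm : ‖e‖ ≤ 1)
    {u w : H} (hu : e u = u) (hw : e w = 0) : (inner ℂ u w : ℂ) = 0 := by
  have hbdd : BddBelow (Set.range fun w' : LinearMap.ker (e : H →ₗ[ℂ] H) => ‖u - (w' : H)‖) := by
    refine ⟨0, ?_⟩
    rintro r ⟨w', rfl⟩
    exact norm_nonneg _
  have hmin : ‖u - 0‖ = ⨅ w' : LinearMap.ker (e : H →ₗ[ℂ] H), ‖u - (w' : H)‖ := by
    rw [sub_zero]
    refine le_antisymm (le_ciInf fun w' => ?_) ?_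
    · have hw' : e (w' : H) = 0 := w'.2
      have heq : e (u - (w' : H)) = u := by rw [map_sub, hu, hw', sub_zero]
      calc ‖u‖ = ‖e (u - (w' : H))‖ := by rw [heq]
        _ ≤ ‖e‖ * ‖u - (w' : H)‖ := e.le_opNorm _
        _ ≤ 1 * ‖u - (w' : H)‖ := mul_le_mul_of_nonneg_right hnorm (norm_nonneg _)
        _ = ‖u - (w' : H)‖ := one_mul _
    · have h0 : (⨅ w' : LinearMap.ker (e : H →ₗ[ℂ] H), ‖u - (w' : H)‖) ≤ ‖u - ((0 : LinearMap.ker (e : H →ₗ[ℂ] H)) : H)‖ :=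
        ciInf_le hbdd 0
      simpa using h0
  have hall := (Submodule.norm_eq_iInf_iff_inner_eq_zero (𝕜 := ℂ) (LinearMap.ker (e : H →ₗ[ℂ] H))
    (Submodule.zero_mem _)).1 hmin w (by simpa [LinearMap.mem_ker] using hw)
  simpa using hall

lemma isSelfAdjoint_of_idem_of_norm_le (e : H →L[ℂ] H)
    (hidem : e * e = e) (hnorm : ‖e‖ ≤ 1) : IsSelfAdjoint e := by
  have hee : ∀ z, e (e z) = e z := fun z => by
    conv_rhs => rw [← hidem]
    rfl
  have hsymm : (e : H →ₗ[ℂ] H).IsSymmetric := by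
    intro x y
    have h1 : (inner ℂ (e x) (y - e y) : ℂ) = 0 :=
      inner_zero_of_fixed_of_ker e hnorm (hee x) (by rw [map_sub, hee, sub_self])
    have h2 : (inner ℂ (e y) (x - e x) : ℂ) = 0 :=
      inner_zero_of_fixed_of_ker e hnorm (hee y) (by rw [map_sub, hee, sub_self])
    have h2' : (inner ℂ (x - e x) (e y) : ℂ) = 0 := inner_eq_zero_symm.mp h2
    have c1 : (inner ℂ (e x) y : ℂ) = inner ℂ (e x) (e y) := by
      have h3 : (inner ℂ (e x) y : ℂ) = inner ℂ (e x) (e y) + inner ℂ (e x) (y - e y) := by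
        rw [← inner_add_right]
        congr 1
        abel
      rw [h3, h1, add_zero]
    have c2 : (inner ℂ x (e y) : ℂ) = inner ℂ (e x) (e y) := by
      have h3 : (inner ℂ x (e y) : ℂ) = inner ℂ (x - e x) (e y) + inner ℂ (e x) (e y) := by
        rw [← inner_add_left]
        congr 1
        abel
      rw [h3, h2', zero_add]
    exact c1.trans c2.symm
  exact hsymm.isSelfAdjoint

lemma norm_le_one_of_idem_sa (p : H →L[ℂ] H) (hidem : p * p = p)
    (hsa : IsSelfAdjoint p) : ‖p‖ ≤ 1 := by
  have h : ‖p‖ * ‖p‖ = ‖p‖ := by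
    conv_rhs => rw [← hidem]
    rw [← CStarRing.norm_star_mul_self (x := p), hsa.star_eq]
  nlinarith [norm_nonneg p]

end AuxAnalysis

section AuxCCHom

theorem CCHom.ext' {A B : OpAlg} {φ ψ : CCHom A B} (h : ∀ x, φ.toHom x = ψ.toHom x) : φ = ψ := by
  rcases φ with ⟨f, hf⟩
  rcases ψ with ⟨g, hg⟩
  have hfg : f = g := DFunLike.ext _ _ h
  subst hfg
  rfl

/-- Composition of completely contractive homomorphisms. -/
def CCHom.comp' {A B C : OpAlg} (ψ : CCHom B C) (φ : CCHom A B) : CCHom A C where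
  toHom := ψ.toHom.comp φ.toHom
  completelyContractive := fun n a =>
    le_trans (ψ.completelyContractive n fun i j => φ.toHom (a i j))
      (φ.completelyContractive n a)

lemma CCHom.norm_le' {A B : OpAlg} (φ : CCHom A B) (x : A.carrier) :
    ‖((φ.toHom x : B.carrier) : B.H →L[ℂ] B.H)‖ ≤ ‖((x : A.carrier) : A.H →L[ℂ] A.H)‖ := by
  have h := φ.completelyContractive 1 (fun _ _ => x)
  exact (matNorm_one B (fun _ _ => φ.toHom x)).symm.trans_le (h.trans_eq (matNorm_one A (fun _ _ => x)))

end AuxCCHom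

/-- If `W` is a collection of subgraphs of `Q`, directed by inclusion,
covering the vertices and the edges of `Q`, then `OA(Q)` is the inductive limit of the
universal operator algebras of the members of `W`, with connecting maps induced by the
inclusions of subgraphs. -/
theorem universalOA_inductive_limit_of_subgraphs
    (Q : DiGraph) (W : Set (Subgraph Q))
    (hdir : DirectedOn (· ≤ ·) W)
    (hV : ⋃ F ∈ W, F.VS = Set.univ) (hE : ⋃ F ∈ W, F.ES = Set.univ)
    (AQ : OpAlg) (ιQ : GraphRep Q AQ) (hQ : IsUniversalOA Q AQ ιQ)
    (A : ∀ F : W, OpAlg) (ι : ∀ F : W, GraphRep F.1.toGraph (A F))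
    (hA : ∀ F : W, IsUniversalOA F.1.toGraph (A F) (ι F))
    (Γ : ∀ F G : W, F.1 ≤ G.1 → CCHom (A F) (A G))
    (hΓ : ∀ (F G : W) (h : F.1 ≤ G.1),
      ExtendsRep (Γ F G h) (ι F) ((ι G).comp (Subgraph.incl h)))
    (Θ : ∀ F : W, CCHom (A F) AQ)
    (hΘ : ∀ F : W, ExtendsRep (Θ F) (ι F) (ιQ.comp F.1.inclTop)) :
    (∀ (F G : W) (h : F.1 ≤ G.1) (x : (A F).carrier),
      (Θ G).toHom ((Γ F G h).toHom x) = (Θ F).toHom x) ∧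
    ∀ (B : OpAlg) (Γ' : ∀ F : W, CCHom (A F) B),
      (∀ (F G : W) (h : F.1 ≤ G.1) (x : (A F).carrier),
        (Γ' G).toHom ((Γ F G h).toHom x) = (Γ' F).toHom x) →
      ∃! Λ : CCHom AQ B, ∀ (F : W) (x : (A F).carrier),
        Λ.toHom ((Θ F).toHom x) = (Γ' F).toHom x := by
  classical
  have part1 : ∀ (F G : W) (h : F.1 ≤ G.1) (x : (A F).carrier),
      (Θ G).toHom ((Γ F G h).toHom x) = (Θ F).toHom x := by
    intro F G h x
    obtain ⟨ψ, hψ, huniq⟩ := (hA F).2 AQ (ιQ.comp F.1.inclTop)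
    have h1 : ExtendsRep (CCHom.comp' (Θ G) (Γ F G h)) (ι F) (ιQ.comp F.1.inclTop) := by
      constructor
      · intro y
        show (Θ G).toHom ((Γ F G h).toHom ((ι F).v y)) = (ιQ.comp F.1.inclTop).v y
        rw [(hΓ F G h).1 y]
        exact (hΘ G).1 _
      · intro y
        show (Θ G).toHom ((Γ F G h).toHom ((ι F).e y)) = (ιQ.comp F.1.inclTop).e y
        rw [(hΓ F G h).2 y]
        exact (hΘ G).2 _
    have heq : CCHom.comp' (Θ G) (Γ F G h) = Θ F := (huniq _ h1).trans (huniq _ (hΘ F)).symm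
    exact congrArg (fun χ : CCHom (A F) AQ => χ.toHom x) heq
  refine ⟨part1, ?_⟩
  intro B Γ' hcomp
  -- choices of covering subgraphs
  have hV' : ∀ x : Q.V, ∃ F : W, x ∈ F.1.VS := by
    intro x
    have hx : x ∈ ⋃ F ∈ W, F.VS := by rw [hV]; exact Set.mem_univ x
    rcases Set.mem_iUnion₂.mp hx with ⟨F, hFW, hxF⟩
    exact ⟨⟨F, hFW⟩, hxF⟩
  have hE' : ∀ z : Q.E, ∃ F : W, z ∈ F.1.ES := by
    intro z
    have hz : z ∈ ⋃ F ∈ W, F.ES := by rw [hE]; exact Set.mem_univ z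
    rcases Set.mem_iUnion₂.mp hz with ⟨F, hFW, hzF⟩
    exact ⟨⟨F, hFW⟩, hzF⟩
  choose FV hFV using hV'
  choose FE hFE using hE'
  -- consistency of the cone maps on generators
  have consV : ∀ (F G : W) (x : Q.V) (hx : x ∈ F.1.VS) (hx' : x ∈ G.1.VS),
      (Γ' F).toHom ((ι F).v ⟨x, hx⟩) = (Γ' G).toHom ((ι G).v ⟨x, hx'⟩) := by
    intro F G x hx hx'
    obtain ⟨K, hKW, hFK, hGK⟩ := hdir F.1 F.2 G.1 G.2
    set K' : W := ⟨K, hKW⟩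
    have hFK' : F.1.VS ⊆ K.VS ∧ F.1.ES ⊆ K.ES := hFK
    have hGK' : G.1.VS ⊆ K.VS ∧ G.1.ES ⊆ K.ES := hGK
    have e1 : (Γ F K' hFK).toHom ((ι F).v ⟨x, hx⟩) = (ι K').v ⟨x, hFK'.1 hx⟩ :=
      (hΓ F K' hFK).1 ⟨x, hx⟩
    have e2 : (Γ G K' hGK).toHom ((ι G).v ⟨x, hx'⟩) = (ι K').v ⟨x, hGK'.1 hx'⟩ :=
      (hΓ G K' hGK).1 ⟨x, hx'⟩
    calc (Γ' F).toHom ((ι F).v ⟨x, hx⟩)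
        = (Γ' K').toHom ((Γ F K' hFK).toHom ((ι F).v ⟨x, hx⟩)) := (hcomp F K' hFK _).symm
      _ = (Γ' K').toHom ((ι K').v ⟨x, hFK'.1 hx⟩) := by rw [e1]
      _ = (Γ' K').toHom ((Γ G K' hGK).toHom ((ι G).v ⟨x, hx'⟩)) := by rw [e2]
      _ = (Γ' G).toHom ((ι G).v ⟨x, hx'⟩) := hcomp G K' hGK _
  have consE : ∀ (F G : W) (z : Q.E) (hz : z ∈ F.1.ES) (hz' : z ∈ G.1.ES),
      (Γ' F).toHom ((ι F).e ⟨z, hz⟩) = (Γ' G).toHom ((ι G).e ⟨z, hz'⟩) := by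
    intro F G z hz hz'
    obtain ⟨K, hKW, hFK, hGK⟩ := hdir F.1 F.2 G.1 G.2
    set K' : W := ⟨K, hKW⟩
    have hFK' : F.1.VS ⊆ K.VS ∧ F.1.ES ⊆ K.ES := hFK
    have hGK' : G.1.VS ⊆ K.VS ∧ G.1.ES ⊆ K.ES := hGK
    have e1 : (Γ F K' hFK).toHom ((ι F).e ⟨z, hz⟩) = (ι K').e ⟨z, hFK'.2 hz⟩ :=
      (hΓ F K' hFK).2 ⟨z, hz⟩
    have e2 : (Γ G K' hGK).toHom ((ι G).e ⟨z, hz'⟩) = (ι K').e ⟨z, hGK'.2 hz'⟩ :=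
      (hΓ G K' hGK).2 ⟨z, hz'⟩
    calc (Γ' F).toHom ((ι F).e ⟨z, hz⟩)
        = (Γ' K').toHom ((Γ F K' hFK).toHom ((ι F).e ⟨z, hz⟩)) := (hcomp F K' hFK _).symm
      _ = (Γ' K').toHom ((ι K').e ⟨z, hFK'.2 hz⟩) := by rw [e1]
      _ = (Γ' K').toHom ((Γ G K' hGK).toHom ((ι G).e ⟨z, hz'⟩)) := by rw [e2]
      _ = (Γ' G).toHom ((ι G).e ⟨z, hz'⟩) := hcomp G K' hGK _
  -- the induced representation of Q in B
  let σv : Q.V → B.carrier := fun x => (Γ' (FV x)).toHom ((ι (FV x)).v ⟨x, hFV x⟩)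
  let σe : Q.E → B.carrier := fun z => (Γ' (FE z)).toHom ((ι (FE z)).e ⟨z, hFE z⟩)
  have hσv : ∀ (x : Q.V) (F : W) (hx : x ∈ F.1.VS),
      σv x = (Γ' F).toHom ((ι F).v ⟨x, hx⟩) := fun x F hx => consV (FV x) F x (hFV x) hx
  have hidv : ∀ x : Q.V, σv x * σv x = σv x := by
    intro x
    show (Γ' (FV x)).toHom _ * (Γ' (FV x)).toHom _ = (Γ' (FV x)).toHom _
    rw [← map_mul]; exact congrArg _ ((ι (FV x)).idem _)
  have hnormv : ∀ x : Q.V, ‖(σv x : B.H →L[ℂ] B.H)‖ ≤ 1 := by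
    intro x
    refine le_trans (CCHom.norm_le' (Γ' (FV x)) _) ?_
    refine norm_le_one_of_idem_sa _ ?_ ((ι (FV x)).selfAdjoint _)
    rw [← MulMemClass.coe_mul]; exact congrArg _ ((ι (FV x)).idem _)
  let σ : GraphRep Q B :=
    { v := σv
      e := σe
      idem := hidv
      selfAdjoint := by
        intro x
        refine isSelfAdjoint_of_idem_of_norm_le _ ?_ (hnormv x)
        rw [← MulMemClass.coe_mul, hidv x]
      contractive := by
        intro z
        exact le_trans (CCHom.norm_le' (Γ' (FE z)) _) ((ι (FE z)).contractive _)
      range_mul := by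
        intro z
        show σv (Q.r z) * σe z = σe z
        rw [hσv (Q.r z) (FE z) ((FE z).1.rng_mem z (hFE z))]
        show (Γ' (FE z)).toHom _ * (Γ' (FE z)).toHom _ = (Γ' (FE z)).toHom _
        rw [← map_mul]
        exact congrArg _ ((ι (FE z)).range_mul ⟨z, hFE z⟩)
      mul_source := by
        intro z
        show σe z * σv (Q.s z) = σe z
        rw [hσv (Q.s z) (FE z) ((FE z).1.src_mem z (hFE z))]
        show (Γ' (FE z)).toHom _ * (Γ' (FE z)).toHom _ = (Γ' (FE z)).toHom _
        rw [← map_mul]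
        exact congrArg _ ((ι (FE z)).mul_source ⟨z, hFE z⟩) }
  obtain ⟨Λ, hΛext, hΛuniq⟩ := hQ.2 B σ
  refine ⟨Λ, ?_, ?_⟩
  · intro F x
    obtain ⟨ψ, hψ, huniq⟩ := (hA F).2 B (σ.comp F.1.inclTop)
    have h1 : ExtendsRep (CCHom.comp' Λ (Θ F)) (ι F) (σ.comp F.1.inclTop) := by
      constructor
      · intro y
        show Λ.toHom ((Θ F).toHom ((ι F).v y)) = (σ.comp F.1.inclTop).v y
        rw [(hΘ F).1 y]
        exact hΛext.1 y.1
      · intro y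
        show Λ.toHom ((Θ F).toHom ((ι F).e y)) = (σ.comp F.1.inclTop).e y
        rw [(hΘ F).2 y]
        exact hΛext.2 y.1
    have h2 : ExtendsRep (Γ' F) (ι F) (σ.comp F.1.inclTop) := by
      constructor
      · intro y
        show (Γ' F).toHom ((ι F).v y) = σv y.1
        rw [hσv y.1 F y.2]
        rfl
      · intro y
        show (Γ' F).toHom ((ι F).e y) = σe y.1
        exact (consE (FE y.1) F y.1 (hFE y.1) y.2).symm
    have heq : CCHom.comp' Λ (Θ F) = Γ' F := (huniq _ h1).trans (huniq _ h2).symm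
    exact congrArg (fun χ : CCHom (A F) B => χ.toHom x) heq
  · intro Λ' hΛ'
    refine hΛuniq Λ' ?_
    constructor
    · intro x
      have h := hΛ' (FV x) ((ι (FV x)).v ⟨x, hFV x⟩)
      rw [(hΘ (FV x)).1 ⟨x, hFV x⟩] at h
      exact h
    · intro z
      have h := hΛ' (FE z) ((ι (FE z)).e ⟨z, hFE z⟩)
      rw [(hΘ (FE z)).2 ⟨z, hFE z⟩] at h
      exact h

end
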